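/- Let n ≥ 1 and let X = {x_1 < x_2 < ... < x_s} ⊆ {1,...,n} be a set of size s. Then the number of permutations σ ∈ S_n such that every element of X is a descent top of σ (i.e. X ⊆ DT(σ)) equals (n − s)! · ∏_{i=1}^{s} (x_i − i). -/

import Mathlib

/-- Descent top set of a permutation `σ` of `Fin (m+1)` (representing `{1,...,m+1}`):
`DT(σ) = {σ(i) : i ∈ {1,...,m}, σ(i) > σ(i+1)}`. -/
def descentTops (m : ℕ) (σ : Equiv.Perm (Fin (m + 1))) : Finset (Fin (m + 1)) :=
  (Finset.univ.filter fun i : Fin m => σ i.succ < σ i.castSucc).image fun i => σ i.castSucc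

/-!
Inserting the new maximum `n + 1` into the one-line notation of `σ ∈ S_n` at any of the `n + 1`
positions gives every permutation of `S_{n+1}` exactly once. The new maximum is a descent top
unless it is placed last, and an old descent top `x` survives unless the maximum is placed
directly after it. So for `σ` with `X ∩ [n] ⊆ DT(σ)` exactly `#X` of the `n + 1` positions are
forbidden, and the count for `X ⊆ [n + 1]` is `n + 1 - #X` times the count for `X ∩ [n]`.
Unwinding this recursion, the factors at non-elements of `X` multiply to `(n + 1 - #X)!` and
the factor at `x_i ∈ X` is `x_i - i`.
-/

open Finset

lemma Fin.val_succAbove_add_one_eq_iff {n : ℕ} (p : Fin (n + 1)) (a b : Fin n) :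
    (p.succAbove a : ℕ) + 1 = p.succAbove b ↔ (a : ℕ) + 1 = b ∧ (p : ℕ) ≠ a + 1 := by
  unfold Fin.succAbove
  split_ifs <;> simp only [Fin.lt_def, Fin.val_castSucc, Fin.val_succ] at * <;> omega

lemma mem_descentTops_iff {m : ℕ} {σ : Equiv.Perm (Fin (m + 1))} {y : Fin (m + 1)} :
    y ∈ descentTops m σ ↔
      ∃ a b : Fin (m + 1), (a : ℕ) + 1 = b ∧ σ a = y ∧ σ b < y := by
  simp only [descentTops, mem_image, mem_filter, mem_univ, true_and]
  constructor
  · rintro ⟨i, hlt, rfl⟩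
    exact ⟨i.castSucc, i.succ, rfl, rfl, hlt⟩
  · rintro ⟨a, b, hab, rfl, hlt⟩
    have hb := b.isLt
    have hsucc : (⟨a, by omega⟩ : Fin m).succ = b := Fin.ext (by simp [hab])
    exact ⟨⟨a, by omega⟩, by rwa [hsucc], rfl⟩

lemma symm_ne_last_of_mem_descentTops {m : ℕ} {σ : Equiv.Perm (Fin (m + 1))} {y : Fin (m + 1)}
    (hy : y ∈ descentTops m σ) : σ.symm y ≠ Fin.last m := by
  obtain ⟨a, b, hab, rfl, -⟩ := mem_descentTops_iff.mp hy
  rw [Equiv.symm_apply_apply]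
  exact fun h => by simp [h] at hab; omega

section Insertion

variable {m : ℕ}

/-- The permutation of `Fin (m + 2)` whose one-line notation is that of `σ` with the new
maximal value `m + 1` inserted at position `p`. -/
def insertMax (p : Fin (m + 2)) (σ : Equiv.Perm (Fin (m + 1))) : Equiv.Perm (Fin (m + 2)) :=
  ((finSuccEquiv' p).trans (Equiv.optionCongr σ)).trans (finSuccEquiv' (Fin.last (m + 1))).symm

@[simp]
lemma insertMax_self (p : Fin (m + 2)) (σ : Equiv.Perm (Fin (m + 1))) :
    insertMax p σ p = Fin.last (m + 1) := by
  simp [insertMax]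

@[simp]
lemma insertMax_succAbove (p : Fin (m + 2)) (σ : Equiv.Perm (Fin (m + 1))) (k : Fin (m + 1)) :
    insertMax p σ (p.succAbove k) = (σ k).castSucc := by
  simp [insertMax, Fin.succAbove_last]

lemma insertMax_injective :
    Function.Injective fun z : Fin (m + 2) × Equiv.Perm (Fin (m + 1)) => insertMax z.1 z.2 := by
  rintro ⟨p, σ⟩ ⟨q, τ⟩ h
  obtain rfl : p = q := (insertMax q τ).injective <| by
    simpa using (congrArg (· p) h).symm
  obtain rfl : σ = τ := Equiv.ext fun k => Fin.castSucc_injective _ <| by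
    simpa using congrArg (· (p.succAbove k)) h
  rfl

noncomputable def insertMaxEquiv (m : ℕ) :
    Fin (m + 2) × Equiv.Perm (Fin (m + 1)) ≃ Equiv.Perm (Fin (m + 2)) :=
  Equiv.ofBijective _ <| (Fintype.bijective_iff_injective_and_card _).mpr
    ⟨insertMax_injective, by simp [Fintype.card_perm, Nat.factorial_succ]⟩

lemma last_mem_descentTops_insertMax_iff (p : Fin (m + 2)) (σ : Equiv.Perm (Fin (m + 1))) :
    Fin.last (m + 1) ∈ descentTops (m + 1) (insertMax p σ) ↔ p ≠ Fin.last (m + 1) := by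
  have hlast : Fin.last (m + 1) = insertMax p σ p := (insertMax_self p σ).symm
  rw [mem_descentTops_iff]
  constructor
  · rintro ⟨a, b, hab, ha, -⟩
    obtain rfl : a = p := (insertMax p σ).injective (ha.trans hlast)
    exact Fin.ne_of_val_ne (by simp only [Fin.val_last]; omega)
  · intro hp
    refine ⟨p, (p.castPred hp).succ, by simp, hlast.symm, ?_⟩
    refine (Fin.le_last _).lt_of_ne fun h => ?_
    have := congrArg Fin.val ((insertMax p σ).injective (h.trans hlast))
    simp at this

lemma castSucc_mem_descentTops_insertMax_iff (p : Fin (m + 2)) (σ : Equiv.Perm (Fin (m + 1)))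
    (x : Fin (m + 1)) :
    x.castSucc ∈ descentTops (m + 1) (insertMax p σ) ↔
      x ∈ descentTops m σ ∧ p ≠ (σ.symm x).succ := by
  simp only [mem_descentTops_iff, Fin.exists_iff_succAbove p, insertMax_self,
    insertMax_succAbove, Fin.castSucc_lt_castSucc_iff, Fin.castSucc_inj,
    Fin.val_succAbove_add_one_eq_iff, (Fin.castSucc_ne_last x).symm, (Fin.le_last _).not_gt,
    false_and, and_false, false_or, exists_false]
  constructor
  · rintro ⟨a, b, ⟨hab, hp⟩, rfl, hb⟩
    exact ⟨⟨a, b, hab, rfl, hb⟩, by simpa [Fin.ext_iff] using hp⟩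
  · rintro ⟨⟨a, b, hab, rfl, hb⟩, hp⟩
    exact ⟨a, b, ⟨hab, by simpa [Fin.ext_iff] using hp⟩, rfl, hb⟩

/-- The position at which inserting the maximum destroys the descent top `x`: right after `x`,
or at the end for `x` the maximum itself. -/
def forbiddenPos (σ : Equiv.Perm (Fin (m + 1))) : Fin (m + 2) → Fin (m + 2) :=
  Fin.lastCases (Fin.last (m + 1)) fun y => (σ.symm y).succ

variable {X : Finset (Fin (m + 2))} {Y : Finset (Fin (m + 1))}

lemma subset_descentTops_insertMax_iff (hXY : ∀ y, y.castSucc ∈ X ↔ y ∈ Y)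
    (p : Fin (m + 2)) (σ : Equiv.Perm (Fin (m + 1))) :
    X ⊆ descentTops (m + 1) (insertMax p σ) ↔
      Y ⊆ descentTops m σ ∧ p ∉ X.image (forbiddenPos σ) := by
  simp only [subset_iff, mem_image, not_exists, not_and, Fin.forall_fin_succ', hXY,
    castSucc_mem_descentTops_insertMax_iff, last_mem_descentTops_insertMax_iff, forbiddenPos,
    Fin.lastCases_castSucc, Fin.lastCases_last]
  grind

lemma injOn_forbiddenPos (hXY : ∀ y, y.castSucc ∈ X ↔ y ∈ Y) {σ : Equiv.Perm (Fin (m + 1))}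
    (hY : Y ⊆ descentTops m σ) : Set.InjOn (forbiddenPos σ) X := by
  have hne : ∀ y : Fin (m + 1), y.castSucc ∈ X →
      forbiddenPos σ y.castSucc ≠ forbiddenPos σ (Fin.last (m + 1)) := fun y hy h => by
    simp only [forbiddenPos, Fin.lastCases_castSucc, Fin.lastCases_last,
      Fin.succ_eq_last_succ] at h
    exact symm_ne_last_of_mem_descentTops (hY ((hXY y).mp hy)) h
  intro x₁ hx₁ x₂ hx₂ h
  induction x₁ using Fin.lastCases <;> induction x₂ using Fin.lastCases
  · rfl
  · exact absurd h.symm (hne _ hx₂)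
  · exact absurd h (hne _ hx₁)
  · simpa [forbiddenPos] using h

lemma card_filter_insertMax_subset_descentTops (hXY : ∀ y, y.castSucc ∈ X ↔ y ∈ Y)
    (σ : Equiv.Perm (Fin (m + 1))) :
    #{p | X ⊆ descentTops (m + 1) (insertMax p σ)} =
      if Y ⊆ descentTops m σ then m + 2 - #X else 0 := by
  simp only [subset_descentTops_insertMax_iff hXY]
  split_ifs with hY
  · rw [filter_and, filter_true_of_mem fun _ _ => hY, univ_inter, filter_notMem_eq_sdiff,
      card_univ_sdiff, card_image_of_injOn (injOn_forbiddenPos hXY hY), Fintype.card_fin]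
  · simp [hY]

lemma card_subset_descentTops_succ (hXY : ∀ y, y.castSucc ∈ X ↔ y ∈ Y) :
    #{τ | X ⊆ descentTops (m + 1) τ} = (m + 2 - #X) * #{σ | Y ⊆ descentTops m σ} := by
  calc #{τ | X ⊆ descentTops (m + 1) τ}
      = #{z : Fin (m + 2) × Equiv.Perm (Fin (m + 1)) |
          X ⊆ descentTops (m + 1) (insertMax z.1 z.2)} :=
        (card_equiv (insertMaxEquiv m) (by simp [insertMaxEquiv])).symm
    _ = ∑ σ, #{p | X ⊆ descentTops (m + 1) (insertMax p σ)} := by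
        simp only [card_filter]
        exact Fintype.sum_prod_type_right _
    _ = ∑ σ, if Y ⊆ descentTops m σ then m + 2 - #X else 0 := by
        simp only [card_filter_insertMax_subset_descentTops hXY]
    _ = (m + 2 - #X) * #{σ | Y ⊆ descentTops m σ} := by
        rw [sum_ite, sum_const_zero, add_zero, sum_const, smul_eq_mul, mul_comm]

end Insertion

/-- `x - #{y ∈ X | y < x}` counts the non-elements of `X` below `x`; for the `i`-th smallest
element it is the factor `x_i - i` of the paper. -/
def gapProd {n : ℕ} (X : Finset (Fin n)) : ℕ :=
  ∏ x ∈ X, ((x : ℕ) - #{y ∈ X | y < x})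

lemma gapProd_map_castSuccEmb {n : ℕ} (Y : Finset (Fin n)) :
    gapProd (Y.map Fin.castSuccEmb) = gapProd Y := by
  simp [gapProd, filter_map, Function.comp_def]

lemma gapProd_insert_last {n : ℕ} {Z : Finset (Fin (n + 1))} (hZ : Fin.last n ∉ Z) :
    gapProd (insert (Fin.last n) Z) = (n - #Z) * gapProd Z := by
  have hlt : ∀ y ∈ Z, y < Fin.last n := fun y hy =>
    Fin.lt_last_iff_ne_last.mpr (ne_of_mem_of_not_mem hy hZ)
  rw [gapProd, gapProd, prod_insert hZ, filter_insert, if_neg (lt_irrefl _),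
    filter_true_of_mem hlt, Fin.val_last]
  congr 1
  refine prod_congr rfl fun x _ => ?_
  rw [filter_insert, if_neg (Fin.le_last x).not_gt]

lemma Finset.card_filter_lt_orderEmbOfFin {α : Type*} [LinearOrder α] (s : Finset α)
    (i : Fin #s) : #{y ∈ s | y < s.orderEmbOfFin rfl i} = i := by
  have : {y ∈ s | y < s.orderEmbOfFin rfl i} = (Iio i).map (s.orderEmbOfFin rfl).toEmbedding := by
    ext y
    simp only [mem_filter, mem_map, mem_Iio, RelEmbedding.coe_toEmbedding]
    constructor
    · rintro ⟨hy, hlt⟩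
      obtain ⟨j, rfl⟩ : y ∈ Set.range (s.orderEmbOfFin rfl) := by simpa using hy
      exact ⟨j, (s.orderEmbOfFin rfl).lt_iff_lt.mp hlt, rfl⟩
    · rintro ⟨j, hj, rfl⟩
      exact ⟨orderEmbOfFin_mem _ _ _, (s.orderEmbOfFin rfl).lt_iff_lt.mpr hj⟩
  rw [this, card_map, Fin.card_Iio]

lemma prod_orderIsoOfFin_eq_gapProd {n : ℕ} (X : Finset (Fin n)) :
    ∏ i : Fin #X, ((((X.orderIsoOfFin rfl i : Fin n) : ℕ) + 1) - ((i : ℕ) + 1)) =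
      gapProd X := by
  calc _ = ∏ x : X, (((x : Fin n) : ℕ) - #{y ∈ X | y < (x : Fin n)}) :=
        Fintype.prod_equiv (X.orderIsoOfFin rfl).toEquiv _ _ fun i => by
          show _ = ((X.orderEmbOfFin rfl i : Fin n) : ℕ) - #{y ∈ X | y < X.orderEmbOfFin rfl i}
          rw [card_filter_lt_orderEmbOfFin, coe_orderIsoOfFin_apply, Nat.add_sub_add_right]
    _ = gapProd X := prod_coe_sort X fun x => (x : ℕ) - #{y ∈ X | y < x}

lemma Fin.exists_finset_eq_map_castSuccEmb {n : ℕ} (X : Finset (Fin (n + 1))) :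
    ∃ Y : Finset (Fin n),
      X = Y.map Fin.castSuccEmb ∨ X = insert (Fin.last n) (Y.map Fin.castSuccEmb) := by
  refine ⟨({y | y.castSucc ∈ X} : Finset (Fin n)), ?_⟩
  by_cases h : Fin.last n ∈ X
  · refine .inr (ext fun x => ?_)
    induction x using Fin.lastCases <;> simp [h]
  · refine .inl (ext fun x => ?_)
    induction x using Fin.lastCases <;> simp [h]

theorem card_subset_descentTops (m : ℕ) (X : Finset (Fin (m + 1))) :
    #{σ | X ⊆ descentTops m σ} = (m + 1 - #X).factorial * gapProd X := by
  induction m with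
  | zero => revert X; decide
  | succ m ih =>
    obtain ⟨Y, rfl | rfl⟩ := Fin.exists_finset_eq_map_castSuccEmb X
    · rw [card_subset_descentTops_succ (Y := Y) (by simp), ih, gapProd_map_castSuccEmb, card_map]
      have hY : #Y ≤ m + 1 := by simpa using card_le_univ Y
      rw [show m + 1 + 1 - #Y = (m + 1 - #Y) + 1 by omega, Nat.factorial_succ]
      ring
    · rw [card_subset_descentTops_succ (Y := Y) (by simp), ih, gapProd_insert_last (by simp),
        gapProd_map_castSuccEmb, card_insert_of_notMem (by simp), card_map]
      rw [show m + 2 - (#Y + 1) = m + 1 - #Y by omega]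
      ring

/-- Let `n = m + 1 ≥ 1` and let `X = {x_1 < ... < x_s} ⊆ {1,...,n}` (elements of `Fin n`,
where the element `x : Fin n` represents the value `x + 1 ∈ {1,...,n}`). Then the number of
permutations `σ ∈ S_n` with `X ⊆ DT(σ)` equals `(n − s)! · ∏_{i=1}^{s} (x_i − i)`. -/
theorem stmt16 (m : ℕ) (X : Finset (Fin (m + 1))) :
    (Finset.univ.filter fun σ : Equiv.Perm (Fin (m + 1)) => X ⊆ descentTops m σ).card =
      (m + 1 - X.card).factorial *
        ∏ i : Fin X.card,
          ((((X.orderIsoOfFin rfl i : Fin (m + 1)) : ℕ) + 1) - ((i : ℕ) + 1)) := by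
  rw [card_subset_descentTops, prod_orderIsoOfFin_eq_gapProd]
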